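/- arXiv:1604.00163 — 2 statements merged into one kernel-verified Lean document; each statement's English description precedes it below -/
import Mathlib

section
/- For every natural number k ≥ 1, the group defined by the presentation ⟨b, d, t | d² = 1, bᵏ = 1, bdb⁻¹d⁻¹ = 1, t²btdt⁻¹d = 1⟩ is isomorphic to the group defined by the two-generator presentation ⟨d, t | d² = 1, t⁻²d⁻¹td⁻¹t⁻¹dtdt⁻¹dt²d⁻¹ = 1, (t³dt⁻¹d)ᵏ = 1⟩. -/
/-- Relators for the presentation `⟨b, d, t | d², bᵏ, bdb⁻¹d⁻¹, t²btdt⁻¹d⟩`,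
with generators `b = 0`, `d = 1`, `t = 2`. -/
def relsBDT (k : ℕ) : Set (FreeGroup (Fin 3)) :=
  let b : FreeGroup (Fin 3) := FreeGroup.of 0
  let d : FreeGroup (Fin 3) := FreeGroup.of 1
  let t : FreeGroup (Fin 3) := FreeGroup.of 2
  {d ^ 2, b ^ k, b * d * b⁻¹ * d⁻¹, t ^ 2 * b * t * d * t⁻¹ * d}

/-- Relators for the presentation
`⟨d, t | d², t⁻²d⁻¹td⁻¹t⁻¹dtdt⁻¹dt²d⁻¹, (t³dt⁻¹d)ᵏ⟩`,
with generators `d = 0`, `t = 1`. -/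
def relsDT (k : ℕ) : Set (FreeGroup (Fin 2)) :=
  let d : FreeGroup (Fin 2) := FreeGroup.of 0
  let t : FreeGroup (Fin 2) := FreeGroup.of 1
  {d ^ 2,
   t⁻¹ * t⁻¹ * d⁻¹ * t * d⁻¹ * t⁻¹ * d * t * d * t⁻¹ * d * t ^ 2 * d⁻¹,
   (t ^ 3 * d * t⁻¹ * d) ^ k}

lemma relOne {α : Type*} {rels : Set (FreeGroup α)} {r : FreeGroup α} (h : r ∈ rels) :
    PresentedGroup.mk rels r = 1 := by
  have : r ∈ Subgroup.normalClosure rels := Subgroup.subset_normalClosure h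
  exact (QuotientGroup.eq_one_iff r).mpr this

theorem presentedGroup_relsBDT_iso_relsDT (k : ℕ) (hk : 1 ≤ k) :
    Nonempty (PresentedGroup (relsBDT k) ≃* PresentedGroup (relsDT k)) := by
  -- generators of the DT group
  set D : PresentedGroup (relsDT k) := PresentedGroup.of 0 with hD
  set T : PresentedGroup (relsDT k) := PresentedGroup.of 1 with hT
  -- generators of the BDT group
  set B' : PresentedGroup (relsBDT k) := PresentedGroup.of 0 with hB'
  set D' : PresentedGroup (relsBDT k) := PresentedGroup.of 1 with hD'
  set T' : PresentedGroup (relsBDT k) := PresentedGroup.of 2 with hT'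
  -- relations in DT
  have rDT1 : D ^ 2 = 1 := by
    have := relOne (rels := relsDT k) (r := (FreeGroup.of 0) ^ 2) (by left; rfl)
    simpa [PresentedGroup.of, hD] using this
  have rDT2 : T⁻¹ * T⁻¹ * D⁻¹ * T * D⁻¹ * T⁻¹ * D * T * D * T⁻¹ * D * T ^ 2 * D⁻¹ = 1 := by
    have := relOne (rels := relsDT k)
      (r := (FreeGroup.of 1)⁻¹ * (FreeGroup.of 1)⁻¹ * (FreeGroup.of 0)⁻¹ * FreeGroup.of 1 *
        (FreeGroup.of 0)⁻¹ * (FreeGroup.of 1)⁻¹ * FreeGroup.of 0 * FreeGroup.of 1 *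
        FreeGroup.of 0 * (FreeGroup.of 1)⁻¹ * FreeGroup.of 0 * (FreeGroup.of 1) ^ 2 *
        (FreeGroup.of 0)⁻¹) (by right; left; rfl)
    simpa [PresentedGroup.of, hD, hT] using this
  have rDT3 : (T ^ 3 * D * T⁻¹ * D) ^ k = 1 := by
    have := relOne (rels := relsDT k)
      (r := ((FreeGroup.of 1) ^ 3 * FreeGroup.of 0 * (FreeGroup.of 1)⁻¹ * FreeGroup.of 0) ^ k)
      (by right; right; rfl)
    simpa [PresentedGroup.of, hD, hT] using this
  -- relations in BDT
  have rB1 : D' ^ 2 = 1 := by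
    have := relOne (rels := relsBDT k) (r := (FreeGroup.of 1) ^ 2) (by left; rfl)
    simpa [PresentedGroup.of, hD'] using this
  have rB2 : B' ^ k = 1 := by
    have := relOne (rels := relsBDT k) (r := (FreeGroup.of 0) ^ k) (by right; left; rfl)
    simpa [PresentedGroup.of, hB'] using this
  have rB3 : B' * D' * B'⁻¹ * D'⁻¹ = 1 := by
    have := relOne (rels := relsBDT k)
      (r := FreeGroup.of 0 * FreeGroup.of 1 * (FreeGroup.of 0)⁻¹ * (FreeGroup.of 1)⁻¹)
      (by right; right; left; rfl)
    simpa [PresentedGroup.of, hB', hD'] using this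
  have rB4 : T' ^ 2 * B' * T' * D' * T'⁻¹ * D' = 1 := by
    have := relOne (rels := relsBDT k)
      (r := (FreeGroup.of 2) ^ 2 * FreeGroup.of 0 * FreeGroup.of 2 * FreeGroup.of 1 *
        (FreeGroup.of 2)⁻¹ * FreeGroup.of 1) (by right; right; right; rfl)
    simpa [PresentedGroup.of, hB', hD', hT'] using this
  -- b expressed in d, t inside BDT
  have hBeq : B' = T'⁻¹ * T'⁻¹ * D'⁻¹ * T' * D'⁻¹ * T'⁻¹ := by
    have h : B' = T'⁻¹ * T'⁻¹ * (T' ^ 2 * B' * T' * D' * T'⁻¹ * D') * D'⁻¹ * T' * D'⁻¹ * T'⁻¹ := by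
      group
    rw [rB4] at h
    rw [h]; group
  -- the map BDT → DT
  let f : Fin 3 → PresentedGroup (relsDT k) := ![T⁻¹ * T⁻¹ * D⁻¹ * T * D⁻¹ * T⁻¹, D, T]
  have hf : ∀ r ∈ relsBDT k, FreeGroup.lift f r = 1 := by
    intro r hr
    rcases hr with h | h | h | h <;> subst h <;>
      simp only [map_mul, map_inv, map_pow, FreeGroup.lift_apply_of, f, Matrix.cons_val_zero,
        Matrix.cons_val_one, Matrix.head_cons, Matrix.cons_val_two, Matrix.tail_cons]
    · exact rDT1
    · -- (T⁻¹T⁻¹D⁻¹TD⁻¹T⁻¹)^k = 1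
      have h1 : T ^ 3 * D * T⁻¹ * D =
          T ^ 2 * (T⁻¹ * T⁻¹ * D⁻¹ * T * D⁻¹ * T⁻¹)⁻¹ * (T ^ 2)⁻¹ := by group
      have h2 := rDT3
      rw [h1, conj_pow, inv_pow] at h2
      have h3 : (((T⁻¹ * T⁻¹ * D⁻¹ * T * D⁻¹ * T⁻¹)) ^ k)⁻¹ = 1 := by
        rw [show (((T⁻¹ * T⁻¹ * D⁻¹ * T * D⁻¹ * T⁻¹)) ^ k)⁻¹ =
          (T ^ 2)⁻¹ * (T ^ 2 * (((T⁻¹ * T⁻¹ * D⁻¹ * T * D⁻¹ * T⁻¹)) ^ k)⁻¹ * (T ^ 2)⁻¹) * T ^ 2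
          from by group, h2]
        group
      exact inv_eq_one.mp h3
    · -- commutator relation
      have h : (T⁻¹ * T⁻¹ * D⁻¹ * T * D⁻¹ * T⁻¹) * D *
          (T⁻¹ * T⁻¹ * D⁻¹ * T * D⁻¹ * T⁻¹)⁻¹ * D⁻¹ =
          T⁻¹ * T⁻¹ * D⁻¹ * T * D⁻¹ * T⁻¹ * D * T * D * T⁻¹ * D * T ^ 2 * D⁻¹ := by group
      rw [h, rDT2]
    · group
  -- the map DT → BDT
  let g : Fin 2 → PresentedGroup (relsBDT k) := ![D', T']
  have hg : ∀ r ∈ relsDT k, FreeGroup.lift g r = 1 := by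
    intro r hr
    rcases hr with h | h | h <;> subst h <;>
      simp only [map_mul, map_inv, map_pow, FreeGroup.lift_apply_of, g, Matrix.cons_val_zero,
        Matrix.cons_val_one, Matrix.head_cons]
    · exact rB1
    · have h : T'⁻¹ * T'⁻¹ * D'⁻¹ * T' * D'⁻¹ * T'⁻¹ * D' * T' * D' * T'⁻¹ * D' * T' ^ 2 * D'⁻¹
          = (T'⁻¹ * T'⁻¹ * D'⁻¹ * T' * D'⁻¹ * T'⁻¹) * D' *
            (T'⁻¹ * T'⁻¹ * D'⁻¹ * T' * D'⁻¹ * T'⁻¹)⁻¹ * D'⁻¹ := by group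
      rw [h, ← hBeq, rB3]
    · have h : T' ^ 3 * D' * T'⁻¹ * D' = T' ^ 2 * B'⁻¹ * (T' ^ 2)⁻¹ := by
        rw [hBeq]; group
      rw [h, conj_pow, inv_pow, rB2]; group
  let φ : PresentedGroup (relsBDT k) →* PresentedGroup (relsDT k) := PresentedGroup.toGroup hf
  let ψ : PresentedGroup (relsDT k) →* PresentedGroup (relsBDT k) := PresentedGroup.toGroup hg
  refine ⟨MonoidHom.toMulEquiv φ ψ ?_ ?_⟩
  · -- ψ ∘ φ = id on BDT
    ext x
    fin_cases x <;>
      simp only [MonoidHom.comp_apply, MonoidHom.id_apply, φ, ψ, PresentedGroup.toGroup.of,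
        f, g, Matrix.cons_val_zero, Matrix.cons_val_one, Matrix.head_cons, Matrix.cons_val_two,
        Matrix.tail_cons, map_mul, map_inv, PresentedGroup.toGroup.of]
    · exact hBeq.symm
    · rfl
    · rfl
  · ext x
    fin_cases x <;>
      simp only [Fin.mk_zero, Fin.mk_one, MonoidHom.comp_apply, MonoidHom.id_apply, φ, ψ,
        PresentedGroup.toGroup.of, f, g, Matrix.cons_val_zero, Matrix.cons_val_one,
        Matrix.head_cons, Matrix.cons_val_two, Matrix.tail_cons, hD, hT, hD', hT',
        PresentedGroup.toGroup.of]
end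

section
/- For every natural number k ≥ 1, the abelianization of the group defined by the presentation ⟨d, t | d² = 1, t⁻²d⁻¹td⁻¹t⁻¹dtdt⁻¹dt²d⁻¹ = 1, (t³dt⁻¹d)ᵏ = 1⟩ is isomorphic to the direct product of a cyclic group of order 2 and a cyclic group of order 2k (that is, to Multiplicative (ZMod 2 × ZMod (2k))). -/
theorem Abelianization.presentedGroup_hom_ext {α M : Type*} [Group M] {rels : Set (FreeGroup α)}
    {φ ψ : Abelianization (PresentedGroup rels) →* M}
    (h : ∀ x, φ (of (PresentedGroup.of x)) = ψ (of (PresentedGroup.of x))) : φ = ψ :=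
  hom_ext φ ψ (PresentedGroup.ext (φ := φ.comp of) (ψ := ψ.comp of) h)

theorem Abelianization.of_mk_eq_one {α : Type*} {rels : Set (FreeGroup α)} {r : FreeGroup α}
    (hr : r ∈ rels) : of (PresentedGroup.mk rels r) = 1 := by
  rw [PresentedGroup.one_of_mem hr, map_one]

namespace ZMod

variable {A : Type*} [AddGroup A] {n : ℕ}

def liftOfNsmulEqZero (a : A) (ha : n • a = 0) : ZMod n →+ A :=
  lift n ⟨zmultiplesHom A a, by simpa using ha⟩

@[simp]
theorem liftOfNsmulEqZero_intCast (a : A) (ha : n • a = 0) (m : ℤ) :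
    liftOfNsmulEqZero a ha m = m • a :=
  lift_coe n _ m

end ZMod

namespace relsDT

open Multiplicative

variable (k : ℕ)

def toZModGen : Fin 2 → Multiplicative (ZMod 2 × ZMod (2 * k)) := ![ofAdd (1, 0), ofAdd (1, 1)]

theorem lift_toZModGen_eq_one : ∀ r ∈ relsDT k, FreeGroup.lift (toZModGen k) r = 1 := by
  have h2 : (2 : ZMod 2) = 0 := rfl
  have h2k : 2 * (k : ZMod (2 * k)) = 0 := mod_cast ZMod.natCast_self (2 * k)
  rintro r (rfl | rfl | rfl) <;>
    simp only [toZModGen, Fin.isValue, map_mul, map_inv, map_pow, FreeGroup.lift_apply_of,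
      Matrix.cons_val_zero, Matrix.cons_val_one, Matrix.cons_val_fin_one, ← ofAdd_add, ← ofAdd_neg,
      ← ofAdd_nsmul, Prod.mk_add_mk, Prod.neg_mk, Prod.smul_mk, ZMod.neg_eq_self_mod_two, neg_zero,
      add_zero, neg_add_cancel_right, smul_add, smul_neg, nsmul_eq_mul, Nat.cast_ofNat, mul_one,
      mul_zero, ofAdd_eq_one, Prod.ext_iff, Prod.fst_zero, Prod.snd_zero, and_true]
  · exact h2
  · exact ⟨by linear_combination 7 * h2, by ring⟩
  · exact ⟨by linear_combination (3 * k : ZMod 2) * h2, by linear_combination h2k⟩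

def toZMod : Abelianization (PresentedGroup (relsDT k)) →* Multiplicative (ZMod 2 × ZMod (2 * k)) :=
  Abelianization.lift (PresentedGroup.toGroup (lift_toZModGen_eq_one k))

theorem toZMod_of (i : Fin 2) :
    toZMod k (Abelianization.of (PresentedGroup.of i)) = toZModGen k i := by
  rw [toZMod, Abelianization.lift_apply_of, PresentedGroup.toGroup.of]

abbrev gen (i : Fin 2) : Additive (Abelianization (PresentedGroup (relsDT k))) :=
  Additive.ofMul (Abelianization.of (PresentedGroup.of i))

theorem two_nsmul_gen_zero : 2 • gen k 0 = 0 := by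
  have h := congrArg Additive.ofMul
    (Abelianization.of_mk_eq_one (rels := relsDT k) (r := FreeGroup.of 0 ^ 2) (by simp [relsDT]))
  simpa only [map_pow, ofMul_pow, ofMul_one, ← PresentedGroup.of.eq_1] using h

theorem two_mul_nsmul_gen_zero_add_gen_one : (2 * k) • (gen k 0 + gen k 1) = 0 := by
  have h := congrArg Additive.ofMul
    (Abelianization.of_mk_eq_one (rels := relsDT k)
      (r := (FreeGroup.of 1 ^ 3 * FreeGroup.of 0 * (FreeGroup.of 1)⁻¹ * FreeGroup.of 0) ^ k)
      (by simp [relsDT]))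
  simp only [map_pow, map_mul, map_inv, ofMul_pow, ofMul_mul, ofMul_inv, ofMul_one,
    ← PresentedGroup.of.eq_1] at h
  rw [← h, mul_nsmul]
  congr 1
  abel

def ofZMod : ZMod 2 × ZMod (2 * k) →+ Additive (Abelianization (PresentedGroup (relsDT k))) :=
  (ZMod.liftOfNsmulEqZero _ (two_nsmul_gen_zero k)).coprod
    (ZMod.liftOfNsmulEqZero _ (two_mul_nsmul_gen_zero_add_gen_one k))

theorem ofZMod_intCast (m n : ℤ) :
    ofZMod k (m, n) = m • gen k 0 + n • (gen k 0 + gen k 1) := by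
  simp [ofZMod]

theorem ofZMod_toZMod_of (i : Fin 2) :
    ofZMod k (toAdd (toZMod k (Abelianization.of (PresentedGroup.of i)))) = gen k i := by
  rw [toZMod_of]
  fin_cases i
  · simpa [toZModGen] using ofZMod_intCast k 1 0
  · have h := ofZMod_intCast k 1 1
    simp only [Int.cast_one, one_smul] at h
    simp only [toZModGen, Fin.mk_one, Fin.isValue, Matrix.cons_val_one, Matrix.cons_val_fin_one,
      toAdd_ofAdd, h]
    rw [← add_assoc, ← two_nsmul, two_nsmul_gen_zero, zero_add]

theorem toZMod_ofZMod_intCast (m n : ℤ) :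
    toZMod k (Additive.toMul (ofZMod k (m, n))) = ofAdd ((m, n) : ZMod 2 × ZMod (2 * k)) := by
  simp only [ofZMod_intCast, Fin.isValue, smul_add, toMul_add, toMul_zsmul, toMul_ofMul, map_mul,
    map_zpow, toZMod_of, toZModGen, Matrix.cons_val_zero, ← ofAdd_zsmul, Prod.smul_mk,
    zsmul_eq_mul, mul_one, smul_zero, Matrix.cons_val_one, Matrix.cons_val_fin_one, ← ofAdd_add,
    Prod.mk_add_mk, zero_add, EmbeddingLike.apply_eq_iff_eq, Prod.ext_iff, add_eq_left, and_true]
  exact CharTwo.add_self_eq_zero _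

theorem ofZMod_comp_toZMod :
    (AddMonoidHom.toMultiplicativeLeft (ofZMod k)).comp (toZMod k) = MonoidHom.id _ :=
  Abelianization.presentedGroup_hom_ext (ofZMod_toZMod_of k)

theorem toZMod_comp_ofZMod :
    (toZMod k).comp (AddMonoidHom.toMultiplicativeLeft (ofZMod k)) = MonoidHom.id _ := by
  refine MonoidHom.ext fun ⟨x, y⟩ => ?_
  obtain ⟨m, rfl⟩ := ZMod.intCast_surjective x
  obtain ⟨n, rfl⟩ := ZMod.intCast_surjective y
  exact toZMod_ofZMod_intCast k m n

end relsDT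

theorem abelianization_relsDT_general (k : ℕ) :
    Nonempty (Abelianization (PresentedGroup (relsDT k)) ≃*
      Multiplicative (ZMod 2 × ZMod (2 * k))) :=
  ⟨MonoidHom.toMulEquiv _ _ (relsDT.ofZMod_comp_toZMod k) (relsDT.toZMod_comp_ofZMod k)⟩

theorem abelianization_relsDT (k : ℕ) (hk : 1 ≤ k) :
    Nonempty (Abelianization (PresentedGroup (relsDT k)) ≃*
      Multiplicative (ZMod 2 × ZMod (2 * k))) :=
  abelianization_relsDT_general k
end
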